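/- arXiv:1611.04494 — 3 statements merged into one kernel-verified Lean document; each statement's English description precedes it below -/
import Mathlib

section
/- Let U₀ be a utility function with inverse marginal I₀ = (U₀′)^{−1}, and let I₁ be an inverse marginal function satisfying the functional equation I₁(a·y) + b·I₁(y) = (1+b)·I₀(c·y) for all y > 0. Define F(x,κ) = U₀(κ) + p·∫_{I₁((q/p)·U₀′(κ))}^{x} I₁^{−1}(ξ) dξ + (1−p)·∫_{I₁(((1−q)/(1−p))·U₀′(κ))}^{x} I₁^{−1}(ξ) dξ for x, κ > 0, where I₁^{−1} is the inverse function of I₁. Then for every x > 0 the map κ ↦ F(x,κ) is constant on (0,∞): F(x,κ) = F(x,1) for all x, κ > 0. -/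
open Set Filter

noncomputable section

/-- A utility function: `C²` on `(0,∞)`, strictly increasing and strictly concave there,
satisfying the Inada conditions. -/
def IsUtility (U : ℝ → ℝ) : Prop :=
  ContDiffOn ℝ 2 U (Set.Ioi 0) ∧
  (∀ x > 0, 0 < deriv U x) ∧
  (∀ x > 0, deriv (deriv U) x < 0) ∧
  Tendsto (deriv U) (nhdsWithin 0 (Set.Ioi 0)) atTop ∧
  Tendsto (deriv U) atTop (nhds 0)

/-- An inverse marginal function: positive, `C¹` on `(0,∞)`, strictly decreasing derivative,
with `I(∞)=0` and `I(0+)=∞`. -/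
def IsInvMarginal (I : ℝ → ℝ) : Prop :=
  (∀ y > 0, 0 < I y) ∧
  ContDiffOn ℝ 1 I (Set.Ioi 0) ∧
  (∀ y > 0, deriv I y < 0) ∧
  Tendsto I atTop (nhds 0) ∧
  Tendsto I (nhdsWithin 0 (Set.Ioi 0)) atTop

/-- `I` is the inverse of the marginal `U'` on the positive reals: `I = (U')⁻¹`. -/
def InvMarginalOf (I U : ℝ → ℝ) : Prop :=
  (∀ x > 0, I (deriv U x) = x) ∧ (∀ y > 0, 0 < I y ∧ deriv U (I y) = y)

/-- `J` is the inverse function of `I` on the positive reals. -/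
def IsInverseOf (J I : ℝ → ℝ) : Prop :=
  (∀ y > 0, J (I y) = y) ∧ (∀ x > 0, 0 < J x ∧ I (J x) = x)

/-- The single-period inverse investment problem:
`U₀(x) = sup {p·U₁(x+π(u−1)) + (1−p)·U₁(x+π(d−1)) : −x/(u−1) ≤ π ≤ x/(1−d)}` for all `x > 0`. -/
def SPIIP (u d p : ℝ) (U₀ U₁ : ℝ → ℝ) : Prop :=
  ∀ x > 0, U₀ x =
    sSup ((fun pi => p * U₁ (x + pi * (u - 1)) + (1 - p) * U₁ (x + pi * (d - 1))) ''
      Set.Icc (-(x / (u - 1))) (x / (1 - d)))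

/-!
Write `A(κ) = I₁((q/p)·U₀′(κ))` and `B(κ) = I₁(((1−q)/(1−p))·U₀′(κ))`. The functional equation at
`y = ((1−q)/(1−p))·U₀′(κ)`, together with `I₀(U₀′(κ)) = κ`, gives `q·A + (1−q)·B = id`, so
`q·A′ + (1−q)·B′ = 1`. Since `I₁⁻¹(A) = (q/p)·U₀′` and `I₁⁻¹(B) = ((1−q)/(1−p))·U₀′`, the fundamental
theorem of calculus gives `∂_κ F = U₀′(κ)·(1 − q·A′(κ) − (1−q)·B′(κ)) = 0`.
-/

open Topology

theorem IsUtility.hasDerivAt {U : ℝ → ℝ} (hU : IsUtility U) {t : ℝ} (ht : 0 < t) :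
    HasDerivAt U (deriv U t) t :=
  ((hU.1.differentiableOn (by norm_num)).differentiableAt (isOpen_Ioi.mem_nhds ht)).hasDerivAt

theorem IsUtility.differentiableAt_deriv {U : ℝ → ℝ} (hU : IsUtility U) {t : ℝ} (ht : 0 < t) :
    DifferentiableAt ℝ (deriv U) t :=
  ((hU.1.deriv_of_isOpen (m := 1) isOpen_Ioi (by norm_num)).differentiableOn one_ne_zero
    ).differentiableAt (isOpen_Ioi.mem_nhds ht)

theorem IsInvMarginal.differentiableAt {I : ℝ → ℝ} (hI : IsInvMarginal I) {y : ℝ} (hy : 0 < y) :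
    DifferentiableAt ℝ I y :=
  (hI.2.1.differentiableOn one_ne_zero).differentiableAt (isOpen_Ioi.mem_nhds hy)

theorem IsInvMarginal.strictAntiOn {I : ℝ → ℝ} (hI : IsInvMarginal I) :
    StrictAntiOn I (Ioi 0) :=
  strictAntiOn_of_deriv_neg (convex_Ioi 0) hI.2.1.continuousOn
    (fun y hy => hI.2.2.1 y (by rwa [interior_Ioi] at hy))

theorem IsInverseOf.strictAntiOn {I J : ℝ → ℝ} (hJ : IsInverseOf J I)
    (hI : StrictAntiOn I (Ioi 0)) : StrictAntiOn J (Ioi 0) := by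
  intro z hz w hw hzw
  obtain ⟨hJz, hIJz⟩ := hJ.2 z hz
  obtain ⟨hJw, hIJw⟩ := hJ.2 w hw
  exact (hI.lt_iff_gt hJz hJw).1 (by rwa [hIJz, hIJw])

theorem IsInverseOf.image_Ioi {I J : ℝ → ℝ} (hJ : IsInverseOf J I) (hIpos : ∀ y > 0, 0 < I y) :
    J '' Ioi 0 = Ioi 0 := by
  refine Subset.antisymm (image_subset_iff.2 fun z hz => (hJ.2 z hz).1) fun y hy => ?_
  exact ⟨I y, hIpos y hy, hJ.1 y hy⟩

theorem IsInverseOf.continuousOn {I J : ℝ → ℝ} (hJ : IsInverseOf J I)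
    (hI : StrictAntiOn I (Ioi 0)) (hIpos : ∀ y > 0, 0 < I y) : ContinuousOn J (Ioi 0) := by
  intro z hz
  have himage : (fun w => -J w) '' Ioi 0 = Iio 0 := by
    rw [← image_image Neg.neg J, hJ.image_Ioi hIpos]
    simp
  have hneg : ContinuousAt (fun w => -J w) z := by
    refine (hJ.strictAntiOn hI).neg.continuousAt_of_image_mem_nhds (Ioi_mem_nhds hz) ?_
    rw [himage]
    exact Iio_mem_nhds (neg_lt_zero.2 (hJ.2 z hz).1)
  simpa only [Pi.neg_def, neg_neg] using hneg.neg.continuousWithinAt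

theorem hasDerivAt_integral_left_of_continuousOn {f : ℝ → ℝ} {s : Set ℝ} (hs : IsOpen s)
    (hs' : s.OrdConnected) (hf : ContinuousOn f s) {a b : ℝ} (ha : a ∈ s) (hb : b ∈ s) :
    HasDerivAt (fun z => ∫ ξ in z..b, f ξ) (-f a) a :=
  intervalIntegral.integral_hasDerivAt_left ((hf.mono (hs'.uIcc_subset ha hb)).intervalIntegrable)
    (hf.stronglyMeasurableAtFilter hs a ha) (hf.continuousAt (hs.mem_nhds ha))

theorem IsInverseOf.hasDerivAt_integral_left {I J : ℝ → ℝ} (hJ : IsInverseOf J I)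
    (hI : IsInvMarginal I) {x y : ℝ} (hx : 0 < x) (hy : 0 < y) :
    HasDerivAt (fun z => ∫ ξ in z..x, J ξ) (-y) (I y) := by
  simpa only [hJ.1 y hy] using hasDerivAt_integral_left_of_continuousOn isOpen_Ioi ordConnected_Ioi
    (hJ.continuousOn hI.strictAntiOn hI.1) (hI.1 y hy) hx

theorem weighted_sum_eq_of_funEq {p q a b c : ℝ} {I₀ I₁ : ℝ → ℝ} (hp0 : 0 < p) (hp1 : p < 1)
    (hq0 : 0 < q) (hq1 : q < 1) (ha : a = ((1 - p) * q) / (p * (1 - q))) (hb : b = (1 - q) / q)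
    (hc : c = (1 - p) / (1 - q)) (hfeq : ∀ y > 0, I₁ (a * y) + b * I₁ y = (1 + b) * I₀ (c * y))
    {m : ℝ} (hm : 0 < m) :
    q * I₁ (q / p * m) + (1 - q) * I₁ ((1 - q) / (1 - p) * m) = I₀ m := by
  have hp1' : 0 < 1 - p := by linarith
  have hq1' : 0 < 1 - q := by linarith
  have h := hfeq ((1 - q) / (1 - p) * m) (by positivity)
  have hay : a * ((1 - q) / (1 - p) * m) = q / p * m := by rw [ha]; field_simp
  have hcy : c * ((1 - q) / (1 - p) * m) = m := by rw [hc]; field_simp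
  have hqb : q * b = 1 - q := by rw [hb]; field_simp
  rw [hay, hcy] at h
  linear_combination q * h + (I₀ m - I₁ ((1 - q) / (1 - p) * m)) * hqb

theorem hasDerivAt_add_comp_eq_zero {U Φ A B : ℝ → ℝ} {p q m t : ℝ} (hp0 : p ≠ 0) (hp1 : p ≠ 1)
    (hU : HasDerivAt U m t) (hA : DifferentiableAt ℝ A t) (hB : DifferentiableAt ℝ B t)
    (hAB : (fun s => q * A s + (1 - q) * B s) =ᶠ[𝓝 t] id)
    (hΦA : HasDerivAt Φ (-(q / p * m)) (A t))
    (hΦB : HasDerivAt Φ (-((1 - q) / (1 - p) * m)) (B t)) :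
    HasDerivAt (fun s => U s + p * Φ (A s) + (1 - p) * Φ (B s)) 0 t := by
  have hslope : q * deriv A t + (1 - q) * deriv B t = 1 :=
    (((hA.hasDerivAt.const_mul q).add (hB.hasDerivAt.const_mul (1 - q))).congr_of_eventuallyEq
      hAB.symm).unique (hasDerivAt_id t)
  have hG : HasDerivAt (fun s => U s + p * Φ (A s) + (1 - p) * Φ (B s))
      (m + p * (-(q / p * m) * deriv A t) + (1 - p) * (-((1 - q) / (1 - p) * m) * deriv B t)) t :=
    (hU.add ((hΦA.comp t hA.hasDerivAt).const_mul p)).add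
      ((hΦB.comp t hB.hasDerivAt).const_mul (1 - p))
  convert hG using 1
  have hp1' : 1 - p ≠ 0 := sub_ne_zero.2 hp1.symm
  field_simp
  linear_combination m * hslope

theorem stmt5_general
    (u d p q a b c : ℝ)
    (hu : 1 < u) (hd1 : d < 1) (hp0 : 0 < p) (hp1 : p < 1)
    (hq : q = (1 - d) / (u - d)) (ha : a = ((1 - p) * q) / (p * (1 - q)))
    (hb : b = (1 - q) / q) (hc : c = (1 - p) / (1 - q))
    (U₀ I₀ I₁ J₁ : ℝ → ℝ)
    (hU₀ : IsUtility U₀) (hI₀ : InvMarginalOf I₀ U₀)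
    (hI₁ : IsInvMarginal I₁)
    (hfeq : ∀ y > 0, I₁ (a * y) + b * I₁ y = (1 + b) * I₀ (c * y))
    (hJ₁ : IsInverseOf J₁ I₁)
    (F : ℝ → ℝ → ℝ)
    (hFdef : ∀ x > 0, ∀ κ > 0, F x κ =
      U₀ κ + p * (∫ ξ in (I₁ ((q / p) * deriv U₀ κ))..x, J₁ ξ)
        + (1 - p) * (∫ ξ in (I₁ (((1 - q) / (1 - p)) * deriv U₀ κ))..x, J₁ ξ)) :
    ∀ x > 0, ∀ κ > 0, F x κ = F x 1 := by
  have hq0 : 0 < q := by rw [hq]; exact div_pos (by linarith) (by linarith)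
  have hq1 : q < 1 := by rw [hq, div_lt_one (by linarith)]; linarith
  have hqp : 0 < q / p := div_pos hq0 hp0
  have hqp' : 0 < (1 - q) / (1 - p) := div_pos (by linarith) (by linarith)
  intro x hx κ hκ
  have hG : ∀ t > 0, HasDerivAt (fun s => U₀ s + p * (∫ ξ in (I₁ ((q / p) * deriv U₀ s))..x, J₁ ξ)
      + (1 - p) * (∫ ξ in (I₁ (((1 - q) / (1 - p)) * deriv U₀ s))..x, J₁ ξ)) 0 t := by
    intro t ht
    have hm := hU₀.2.1 t ht
    have hdiff : ∀ r > 0, DifferentiableAt ℝ (fun s => I₁ (r * deriv U₀ s)) t := fun r hr =>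
      (hI₁.differentiableAt (mul_pos hr hm)).comp t ((hU₀.differentiableAt_deriv ht).const_mul r)
    refine hasDerivAt_add_comp_eq_zero hp0.ne' hp1.ne (hU₀.hasDerivAt ht) (hdiff _ hqp)
      (hdiff _ hqp') ?_ (hJ₁.hasDerivAt_integral_left hI₁ hx (mul_pos hqp hm))
      (hJ₁.hasDerivAt_integral_left hI₁ hx (mul_pos hqp' hm))
    filter_upwards [Ioi_mem_nhds ht] with s hs
    rw [weighted_sum_eq_of_funEq hp0 hp1 hq0 hq1 ha hb hc hfeq (hU₀.2.1 s hs), hI₀.1 s hs, id]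
  rw [hFdef x hx κ hκ, hFdef x hx 1 one_pos]
  exact isOpen_Ioi.is_const_of_deriv_eq_zero isPreconnected_Ioi
    (fun t ht => (hG t ht).differentiableAt.differentiableWithinAt) (fun t ht => (hG t ht).deriv)
    hκ (mem_Ioi.2 one_pos)

/-- The function
`F(x,κ) = U₀(κ) + p·∫_{I₁((q/p)U₀'(κ))}^x I₁⁻¹ + (1−p)·∫_{I₁(((1−q)/(1−p))U₀'(κ))}^x I₁⁻¹`
does not depend on `κ > 0`: `F(x,κ) = F(x,1)` for all `x, κ > 0`. -/
theorem stmt5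
    (u d p q a b c : ℝ)
    (hu : 1 < u) (hd0 : 0 < d) (hd1 : d < 1) (hp0 : 0 < p) (hp1 : p < 1)
    (hq : q = (1 - d) / (u - d)) (ha : a = ((1 - p) * q) / (p * (1 - q)))
    (hb : b = (1 - q) / q) (hc : c = (1 - p) / (1 - q))
    (U₀ I₀ I₁ J₁ : ℝ → ℝ)
    (hU₀ : IsUtility U₀) (hI₀ : InvMarginalOf I₀ U₀)
    (hI₁ : IsInvMarginal I₁)
    (hfeq : ∀ y > 0, I₁ (a * y) + b * I₁ y = (1 + b) * I₀ (c * y))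
    (hJ₁ : IsInverseOf J₁ I₁)
    (F : ℝ → ℝ → ℝ)
    (hFdef : ∀ x > 0, ∀ κ > 0, F x κ =
      U₀ κ + p * (∫ ξ in (I₁ ((q / p) * deriv U₀ κ))..x, J₁ ξ)
        + (1 - p) * (∫ ξ in (I₁ (((1 - q) / (1 - p)) * deriv U₀ κ))..x, J₁ ξ)) :
    ∀ x > 0, ∀ κ > 0, F x κ = F x 1 :=
  stmt5_general u d p q a b c hu hd1 hp0 hp1 hq ha hb hc U₀ I₀ I₁ J₁ hU₀ hI₀ hI₁ hfeq hJ₁ F hFdef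
end
end

section
/- Assume a ≠ 1 and let I₀ be an inverse marginal function. Set Φ₀(y) = I₀(a·c·y) − b·I₀(c·y) and Ψ₀(y) = y^{−L}·I₀(c·y) for y > 0, where L = ln b / ln a. Suppose Φ₀ is strictly decreasing on (0,∞) and that either (a > 1 and lim_{y→0+} Ψ₀(y) = 0) or (a < 1 and lim_{y→∞} Ψ₀(y) = 0). Then for every y > 0 the series I₁(y) = (1+b)·∑_{m=0}^{∞} (−1)^m · b^{m} · I₀(a^{−(m+1)} · c · y) converges, and the resulting function I₁ satisfies the functional equation I₁(a·y) + b·I₁(y) = (1+b)·I₀(c·y) for all y > 0. -/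
open Set Filter

noncomputable section

open Topology

/-!
Put `J y = I₀ (c y)` and `w_m(y) = b^m J(a^{-m} y)`, so that the `m`-th term of the series is
`(1 + b) (-1)^m w_{m+1}(y) / b` and `Φ₀(z) = J(a z) - b J(z)`. Since `a^L = b`,
`w_m(y) = y^L Ψ₀(a^{-m} y)`, and the hypothesis on `Ψ₀` says exactly that `w_m(y) → 0`.

Convergence is the alternating series test: `w_m - w_{m+1} = b^m Φ₀(a^{-(m+1)} y)`, whose sign is
monotone in `m` because `Φ₀` is decreasing and `a^{-m} y` is monotone in `m`; it cannot be
eventually negative, as `w` is positive and tends to `0`, so `w` is eventually decreasing.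
The partial sums at `a y` and at `y` telescope: `S_N(a y) + b S_N(y) = w_0 - (-1)^N w_N`, and
`w_0 = J(y)` gives the functional equation in the limit.
-/

lemma tendsto_alternating_series_of_eventually_antitone {f : ℕ → ℝ} {M : ℕ}
    (hf : ∀ m ≥ M, f (m + 1) ≤ f m) (h0 : Tendsto f atTop (𝓝 0)) :
    ∃ l, Tendsto (fun n => ∑ i ∈ Finset.range n, (-1) ^ i * f i) atTop (𝓝 l) := by
  set S := fun n => ∑ i ∈ Finset.range n, (-1 : ℝ) ^ i * f i
  have hanti : Antitone fun n => f (n + M) :=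
    antitone_nat_of_succ_le fun n => by simpa only [add_right_comm] using hf (n + M) (by omega)
  obtain ⟨l, hl⟩ :=
    hanti.tendsto_alternating_series_of_tendsto_zero ((tendsto_add_atTop_iff_nat M).2 h0)
  have hshift : ∀ n, S (n + M) = S M + (-1) ^ M * ∑ i ∈ Finset.range n, (-1) ^ i * f (i + M) := by
    intro n
    simp only [S, add_comm n M, Finset.sum_range_add, Finset.mul_sum, pow_add, add_comm _ M,
      mul_assoc]
  refine ⟨S M + (-1) ^ M * l, (tendsto_add_atTop_iff_nat M).1 ?_⟩
  simp only [hshift]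
  exact tendsto_const_nhds.add (hl.const_mul _)

lemma frequently_succ_le_of_tendsto_zero {w : ℕ → ℝ} (hpos : ∀ n, 0 < w n)
    (hw : Tendsto w atTop (𝓝 0)) : ∃ᶠ n in atTop, w (n + 1) ≤ w n := by
  intro h
  obtain ⟨N, hN⟩ := eventually_atTop.1 h
  have hge : ∀ n ≥ N, w N ≤ w n := fun n hn => by
    induction n, hn using Nat.le_induction with
    | base => rfl
    | succ n hn ih => exact ih.trans (not_le.1 (hN n hn)).le
  exact (hpos N).not_ge (ge_of_tendsto hw (eventually_atTop.2 ⟨N, hge⟩))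

lemma eventually_le_of_frequently_le {β : Type*} [Preorder β] {φ : ℕ → β} {x : β}
    (hφ : Monotone φ ∨ Antitone φ) (h : ∃ᶠ n in atTop, x ≤ φ n) : ∀ᶠ n in atTop, x ≤ φ n := by
  rcases hφ with hφ | hφ
  · obtain ⟨m, hm⟩ := h.exists
    exact eventually_atTop.2 ⟨m, fun n hn => hm.trans (hφ hn)⟩
  · refine Eventually.of_forall fun n => ?_
    obtain ⟨m, hnm, hm⟩ := frequently_atTop.1 h n
    exact hm.trans (hφ hnm)

lemma AntitoneOn.monotone_or_antitone_comp_geom {φ : ℝ → ℝ} (hφ : AntitoneOn φ (Ioi 0)) {r y : ℝ}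
    (hr : 0 < r) (hy : 0 < y) : Monotone (fun m : ℕ => φ (r ^ m * y)) ∨
      Antitone (fun m : ℕ => φ (r ^ m * y)) := by
  have hmem : ∀ m : ℕ, r ^ m * y ∈ Ioi 0 := fun m => mul_pos (pow_pos hr m) hy
  rcases le_total r 1 with h | h
  · exact .inl fun m n hmn => hφ (hmem n) (hmem m) <|
      mul_le_mul_of_nonneg_right (pow_right_anti₀ hr.le h hmn) hy.le
  · exact .inr fun m n hmn => hφ (hmem m) (hmem n) <|
      mul_le_mul_of_nonneg_right (pow_right_mono₀ h hmn) hy.le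

def scaledOrbit (a b : ℝ) (J : ℝ → ℝ) (y : ℝ) (m : ℕ) : ℝ := b ^ m * J (a⁻¹ ^ m * y)

section ScaledOrbit

variable {a b : ℝ} {J : ℝ → ℝ}

lemma scaledOrbit_zero (y : ℝ) : scaledOrbit a b J y 0 = J y := by
  simp [scaledOrbit]

lemma scaledOrbit_sub_succ (ha : a ≠ 0) (y : ℝ) (m : ℕ) :
    scaledOrbit a b J y m - scaledOrbit a b J y (m + 1) =
      b ^ m * (J (a * (a⁻¹ ^ m * (a⁻¹ * y))) - b * J (a⁻¹ ^ m * (a⁻¹ * y))) := by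
  have h₁ : a * (a⁻¹ ^ m * (a⁻¹ * y)) = a⁻¹ ^ m * y := by field_simp
  have h₂ : a⁻¹ ^ m * (a⁻¹ * y) = a⁻¹ ^ (m + 1) * y := by ring
  rw [h₁, h₂, scaledOrbit, scaledOrbit]
  ring

lemma scaledOrbit_pos (ha : 0 < a) (hb : 0 < b) (hJ : ∀ y > 0, 0 < J y) {y : ℝ} (hy : 0 < y)
    (m : ℕ) : 0 < scaledOrbit a b J y m :=
  mul_pos (pow_pos hb m) (hJ _ (mul_pos (pow_pos (inv_pos.2 ha) m) hy))

lemma eventually_scaledOrbit_succ_le (ha : 0 < a) (hb : 0 < b) (hJ : ∀ y > 0, 0 < J y)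
    (hΦ : AntitoneOn (fun z => J (a * z) - b * J z) (Ioi 0)) {y : ℝ} (hy : 0 < y)
    (hw : Tendsto (scaledOrbit a b J y) atTop (𝓝 0)) :
    ∀ᶠ m in atTop, scaledOrbit a b J y (m + 1) ≤ scaledOrbit a b J y m := by
  have hdecr : ∀ m, scaledOrbit a b J y (m + 1) ≤ scaledOrbit a b J y m ↔
      0 ≤ J (a * (a⁻¹ ^ m * (a⁻¹ * y))) - b * J (a⁻¹ ^ m * (a⁻¹ * y)) := fun m => by
    rw [← sub_nonneg, scaledOrbit_sub_succ ha.ne', mul_nonneg_iff_of_pos_left (pow_pos hb m)]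
  have hfreq := frequently_succ_le_of_tendsto_zero (scaledOrbit_pos ha hb hJ hy) hw
  simp only [hdecr] at hfreq ⊢
  exact eventually_le_of_frequently_le
    (hΦ.monotone_or_antitone_comp_geom (inv_pos.2 ha) (mul_pos (inv_pos.2 ha) hy)) hfreq

lemma exists_tendsto_alternating_scaledOrbit (ha : 0 < a) (hb : 0 < b) (hJ : ∀ y > 0, 0 < J y)
    (hΦ : AntitoneOn (fun z => J (a * z) - b * J z) (Ioi 0)) {y : ℝ} (hy : 0 < y)
    (hw : Tendsto (scaledOrbit a b J y) atTop (𝓝 0)) :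
    ∃ l, Tendsto (fun N => ∑ m ∈ Finset.range N, (-1) ^ m * b ^ m * J (a⁻¹ ^ (m + 1) * y))
      atTop (𝓝 l) := by
  have hterm : ∀ m : ℕ, (-1) ^ m * b ^ m * J (a⁻¹ ^ (m + 1) * y) =
      (-1) ^ m * (scaledOrbit a b J y (m + 1) / b) := fun m => by
    rw [scaledOrbit, pow_succ b]
    field_simp
  obtain ⟨M, hM⟩ := eventually_atTop.1 (eventually_scaledOrbit_succ_le ha hb hJ hΦ hy hw)
  simp only [hterm]
  refine tendsto_alternating_series_of_eventually_antitone (M := M)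
    (fun m hm => div_le_div_of_nonneg_right (hM (m + 1) (by omega)) hb.le) ?_
  simpa using ((tendsto_add_atTop_iff_nat 1).2 hw).div_const b

lemma alternating_sum_mul_add_mul_alternating_sum (ha : a ≠ 0) (y : ℝ) (N : ℕ) :
    ∑ m ∈ Finset.range N, (-1) ^ m * b ^ m * J (a⁻¹ ^ (m + 1) * (a * y)) +
        b * ∑ m ∈ Finset.range N, (-1) ^ m * b ^ m * J (a⁻¹ ^ (m + 1) * y) =
      scaledOrbit a b J y 0 - (-1) ^ N * scaledOrbit a b J y N := by
  have htel := Finset.sum_range_sub' (fun m => (-1) ^ m * scaledOrbit a b J y m) N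
  rw [pow_zero, one_mul] at htel
  rw [Finset.mul_sum, ← Finset.sum_add_distrib, ← htel]
  refine Finset.sum_congr rfl fun m _ => ?_
  have h : a⁻¹ ^ (m + 1) * (a * y) = a⁻¹ ^ m * y := by rw [pow_succ]; field_simp
  rw [h, scaledOrbit, scaledOrbit]
  ring

theorem exists_alternating_solution_of_antitoneOn (ha : 0 < a) (hb : 0 < b)
    (hJ : ∀ y > 0, 0 < J y) (hΦ : AntitoneOn (fun z => J (a * z) - b * J z) (Ioi 0))
    (hw : ∀ y > 0, Tendsto (scaledOrbit a b J y) atTop (𝓝 0)) :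
    ∃ K : ℝ → ℝ,
      (∀ y > 0, Tendsto
        (fun N => ∑ m ∈ Finset.range N, (-1) ^ m * b ^ m * J (a⁻¹ ^ (m + 1) * y))
        atTop (𝓝 (K y))) ∧
      ∀ y > 0, K (a * y) + b * K y = J y := by
  choose! K hK using fun y (hy : 0 < y) =>
    exists_tendsto_alternating_scaledOrbit ha hb hJ hΦ hy (hw y hy)
  refine ⟨K, hK, fun y hy =>
    tendsto_nhds_unique ((hK _ (mul_pos ha hy)).add ((hK y hy).const_mul b)) ?_⟩
  have hvanish : Tendsto (fun N => (-1) ^ N * scaledOrbit a b J y N) atTop (𝓝 0) := by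
    refine squeeze_zero_norm (fun N => ?_) (tendsto_zero_iff_norm_tendsto_zero.1 (hw y hy))
    simp
  simpa only [alternating_sum_mul_add_mul_alternating_sum ha.ne', scaledOrbit_zero, sub_zero] using
    tendsto_const_nhds.sub hvanish

lemma tendsto_scaledOrbit_zero {L y : ℝ} (ha : 0 < a) (hab : a ^ L = b) (hy : 0 < y)
    (hΨ : (1 < a ∧ Tendsto (fun z => z ^ (-L) * J z) (𝓝[>] 0) (𝓝 0)) ∨
      (a < 1 ∧ Tendsto (fun z => z ^ (-L) * J z) atTop (𝓝 0))) :
    Tendsto (scaledOrbit a b J y) atTop (𝓝 0) := by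
  have horbit : scaledOrbit a b J y =
      fun m => y ^ L * ((a⁻¹ ^ m * y) ^ (-L) * J (a⁻¹ ^ m * y)) := funext fun m => by
    have hy' : y ^ L * y ^ (-L) = 1 := by
      rw [Real.rpow_neg hy.le, mul_inv_cancel₀ (Real.rpow_pos_of_pos hy L).ne']
    rw [scaledOrbit, Real.mul_rpow (pow_nonneg (inv_nonneg.2 ha.le) m) hy.le,
      ← Real.rpow_pow_comm (inv_nonneg.2 ha.le), Real.inv_rpow ha.le, Real.rpow_neg ha.le, inv_inv,
      hab]
    linear_combination (-(b ^ m * J (a⁻¹ ^ m * y))) * hy'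
  have hgeom : Tendsto (fun m : ℕ => (a⁻¹ ^ m * y) ^ (-L) * J (a⁻¹ ^ m * y)) atTop (𝓝 0) := by
    rcases hΨ with ⟨ha1, hΨ⟩ | ⟨ha1, hΨ⟩
    · refine hΨ.comp (tendsto_nhdsWithin_of_tendsto_nhds_of_eventually_within _ ?_
        (Eventually.of_forall fun m => mul_pos (pow_pos (inv_pos.2 ha) m) hy))
      simpa using (tendsto_pow_atTop_nhds_zero_of_lt_one (inv_nonneg.2 ha.le)
        (inv_lt_one_of_one_lt₀ ha1)).mul_const y
    · exact hΨ.comp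
        ((tendsto_pow_atTop_atTop_of_one_lt ((one_lt_inv₀ ha).2 ha1)).atTop_mul_const hy)
  rw [horbit]
  simpa using hgeom.const_mul (y ^ L)

end ScaledOrbit

theorem stmt12_general
    (u d p q a b c L : ℝ)
    (hu : 1 < u) (hd1 : d < 1) (hp0 : 0 < p) (hp1 : p < 1)
    (hq : q = (1 - d) / (u - d)) (ha : a = ((1 - p) * q) / (p * (1 - q)))
    (hb : b = (1 - q) / q) (hc : c = (1 - p) / (1 - q))
    (ha1 : a ≠ 1)
    (hL : L = Real.log b / Real.log a)
    (I₀ : ℝ → ℝ) (hI₀ : IsInvMarginal I₀)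
    (hΦ : StrictAntiOn (fun y => I₀ (a * c * y) - b * I₀ (c * y)) (Set.Ioi 0))
    (hΨ : (1 < a ∧ Tendsto (fun y => y ^ (-L) * I₀ (c * y)) (nhdsWithin 0 (Set.Ioi 0)) (nhds 0)) ∨
          (a < 1 ∧ Tendsto (fun y => y ^ (-L) * I₀ (c * y)) atTop (nhds 0))) :
    ∃ I₁ : ℝ → ℝ,
      (∀ y > 0, Tendsto
        (fun N => ∑ m ∈ Finset.range N,
          (1 + b) * ((-1 : ℝ) ^ m * b ^ m * I₀ (a ^ (-((m : ℤ) + 1)) * c * y)))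
        atTop (nhds (I₁ y))) ∧
      (∀ y > 0, I₁ (a * y) + b * I₁ y = (1 + b) * I₀ (c * y)) := by
  have hq0 : 0 < q := hq ▸ div_pos (by linarith) (by linarith)
  have hq1 : q < 1 := by rw [hq, div_lt_one (by linarith)]; linarith
  have ha0 : 0 < a := ha ▸ div_pos (mul_pos (by linarith) hq0) (mul_pos hp0 (by linarith))
  have hb0 : 0 < b := hb ▸ div_pos (by linarith) hq0
  have hc0 : 0 < c := hc ▸ div_pos (by linarith) (by linarith)
  have hab : a ^ L = b := hL ▸ Real.rpow_logb ha0 ha1 hb0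
  have hΦ' : AntitoneOn (fun z => I₀ (c * (a * z)) - b * I₀ (c * z)) (Ioi 0) := by
    simpa only [mul_left_comm c a, mul_comm c a, mul_assoc] using hΦ.antitoneOn
  obtain ⟨K, hK, hKa⟩ := exists_alternating_solution_of_antitoneOn (J := fun z => I₀ (c * z))
    ha0 hb0 (fun y hy => hI₀.1 _ (mul_pos hc0 hy)) hΦ'
    (fun y hy => tendsto_scaledOrbit_zero ha0 hab hy hΨ)
  refine ⟨fun y => (1 + b) * K y, fun y hy => ?_, fun y hy => ?_⟩
  · have hterm : ∀ m : ℕ, a ^ (-((m : ℤ) + 1)) * c * y = c * (a⁻¹ ^ (m + 1) * y) := fun m => by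
      rw [← zpow_natCast, ← zpow_neg_one, ← zpow_mul, Nat.cast_succ]
      ring_nf
    simpa only [hterm, Finset.mul_sum] using (hK y hy).const_mul (1 + b)
  · linear_combination (1 + b) * hKa y hy

/-- Under the decreasing-`Φ₀` conditions, the alternating series
`I₁(y) = (1+b)·∑ (−1)^m b^m I₀(a^{−(m+1)} c y)` converges for every `y > 0`, and the resulting
function solves the functional equation. -/
theorem stmt12
    (u d p q a b c L : ℝ)
    (hu : 1 < u) (hd0 : 0 < d) (hd1 : d < 1) (hp0 : 0 < p) (hp1 : p < 1)
    (hq : q = (1 - d) / (u - d)) (ha : a = ((1 - p) * q) / (p * (1 - q)))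
    (hb : b = (1 - q) / q) (hc : c = (1 - p) / (1 - q))
    (ha1 : a ≠ 1)
    (hL : L = Real.log b / Real.log a)
    (I₀ : ℝ → ℝ) (hI₀ : IsInvMarginal I₀)
    (hΦ : StrictAntiOn (fun y => I₀ (a * c * y) - b * I₀ (c * y)) (Set.Ioi 0))
    (hΨ : (1 < a ∧ Tendsto (fun y => y ^ (-L) * I₀ (c * y)) (nhdsWithin 0 (Set.Ioi 0)) (nhds 0)) ∨
          (a < 1 ∧ Tendsto (fun y => y ^ (-L) * I₀ (c * y)) atTop (nhds 0))) :
    ∃ I₁ : ℝ → ℝ,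
      (∀ y > 0, Tendsto
        (fun N => ∑ m ∈ Finset.range N,
          (1 + b) * ((-1 : ℝ) ^ m * b ^ m * I₀ (a ^ (-((m : ℤ) + 1)) * c * y)))
        atTop (nhds (I₁ y))) ∧
      (∀ y > 0, I₁ (a * y) + b * I₁ y = (1 + b) * I₀ (c * y)) :=
  stmt12_general u d p q a b c L hu hd1 hp0 hp1 hq ha hb hc ha1 hL I₀ hI₀ hΦ hΨ
end
end

section
/- Assume a ≠ 1 and let I₀ be an inverse marginal function. Set Φ₀(y) = I₀(a·c·y) − b·I₀(c·y) and Ψ₀(y) = y^{−L}·I₀(c·y) for y > 0, where L = ln b / ln a. Suppose Φ₀ is strictly increasing on (0,∞) and that either (a > 1 and lim_{y→∞} Ψ₀(y) = 0) or (a < 1 and lim_{y→0+} Ψ₀(y) = 0), and define I₁(y) = ((1+b)/b)·∑_{m=0}^{∞} (−1)^m · b^{−m} · I₀(a^m · c · y). Then I₁ is the unique positive solution of the functional equation: any function Ĩ : (0,∞) → (0,∞) satisfying Ĩ(a·y) + b·Ĩ(y) = (1+b)·I₀(c·y) for all y > 0 coincides with I₁ on (0,∞). In particular, I₁ is the only inverse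 marginal function solving the functional equation. -/
open Set Filter

noncomputable section

/-! With `T F y = F (a * y)` and `g y = (1 + b) I₀ (c y)`, the series defining `I₁` is the Neumann
series `b⁻¹ ∑ (-T/b)^m g` of `(T + b)⁻¹ g`, so it solves `T F + b F = g` wherever it converges.
Grouping its terms in pairs gives `b^(-2k-2) (b g - T g)(a^(2k) y)`, and `T g < b g` because `Φ₀`
increases strictly to its limit `0` at infinity; hence `I₁ > 0`. Any positive solution lies in
`(0, g/b)`, and the difference `D` of two of them satisfies `D (a y) = -b D y`, so
`|D y| ≤ b^(-m-1) g (a^m y) = (1 + b) b⁻¹ y^L Ψ₀ (a^m y)` (as `a^L = b`), which tends to `0` along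
the orbit `a^m y`. -/

open Finset Topology

def neumannSum (a b : ℝ) (g : ℝ → ℝ) (y : ℝ) (N : ℕ) : ℝ :=
  ∑ m ∈ range N, (-b)⁻¹ ^ m * g (a ^ m * y) / b

lemma neumannSum_mul_left {a b : ℝ} (hb : b ≠ 0) (g : ℝ → ℝ) (y : ℝ) (N : ℕ) :
    neumannSum a b g (a * y) N = g y - b * neumannSum a b g y (N + 1) := by
  have hterm : ∀ m : ℕ, (-b)⁻¹ ^ m * g (a ^ m * (a * y)) / b
      = -(b * ((-b)⁻¹ ^ (m + 1) * g (a ^ (m + 1) * y) / b)) := by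
    intro m
    rw [pow_succ', mul_assoc, pow_succ]
    field_simp
  rw [neumannSum, neumannSum, sum_range_succ', mul_add, mul_sum]
  simp only [hterm, sum_neg_distrib, pow_zero, one_mul, mul_div_cancel₀ _ hb]
  ring

lemma neumannSum_functional_eq {a b : ℝ} (hb : b ≠ 0) {g S : ℝ → ℝ} {y : ℝ}
    (hy : Tendsto (neumannSum a b g y) atTop (𝓝 (S y)))
    (hay : Tendsto (neumannSum a b g (a * y)) atTop (𝓝 (S (a * y)))) :
    S (a * y) + b * S y = g y := by
  have h : Tendsto (fun N ↦ g y - b * neumannSum a b g y (N + 1)) atTop (𝓝 (g y - b * S y)) :=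
    ((hy.comp (tendsto_add_atTop_nat 1)).const_mul b).const_sub (g y)
  simp_rw [← neumannSum_mul_left hb] at h
  rw [tendsto_nhds_unique hay h]
  ring

lemma pos_of_tendsto_sum_range_of_pair_pos {t : ℕ → ℝ} {S : ℝ}
    (h : Tendsto (fun N ↦ ∑ m ∈ range N, t m) atTop (𝓝 S))
    (hpair : ∀ k, 0 < t (2 * k) + t (2 * k + 1)) : 0 < S := by
  have hsplit : ∀ K, ∑ m ∈ range (2 * K), t m = ∑ k ∈ range K, (t (2 * k) + t (2 * k + 1)) := by
    intro K
    induction K with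
    | zero => simp
    | succ K ih => rw [mul_add, sum_range_succ, sum_range_succ, sum_range_succ, ih, add_assoc]
  have heven : Tendsto (fun K ↦ ∑ k ∈ range K, (t (2 * k) + t (2 * k + 1))) atTop (𝓝 S) := by
    simpa only [Function.comp_def, hsplit, id] using
      h.comp (tendsto_id.const_mul_atTop' (by norm_num : 0 < 2))
  refine (hpair 0).trans_le (ge_of_tendsto heven ?_)
  filter_upwards [eventually_ge_atTop 1] with K hK
  exact single_le_sum (fun k _ ↦ (hpair k).le) (mem_range.2 hK)

lemma neumannSum_limit_pos {a b : ℝ} (ha : 0 < a) (hb : 0 < b) {g : ℝ → ℝ} {S y : ℝ}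
    (hy : 0 < y) (hS : Tendsto (neumannSum a b g y) atTop (𝓝 S))
    (hg : ∀ z > 0, g (a * z) < b * g z) : 0 < S := by
  refine pos_of_tendsto_sum_range_of_pair_pos hS fun k ↦ ?_
  have hsq : (-b)⁻¹ ^ (2 * k) = (b ^ 2)⁻¹ ^ k := by rw [pow_mul, inv_pow, neg_sq]
  simp only [pow_succ (-b)⁻¹ (2 * k), pow_succ' a (2 * k), mul_assoc a, hsq]
  set z := a ^ (2 * k) * y
  have hgz : 0 < b * g z - g (a * z) := by linarith [hg z (by positivity)]
  have hpair : (b ^ 2)⁻¹ ^ k * g z / b + (b ^ 2)⁻¹ ^ k * (-b)⁻¹ * g (a * z) / b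
      = (b ^ 2)⁻¹ ^ k * (b * g z - g (a * z)) / b ^ 2 := by
    field_simp
    ring
  rw [hpair]
  positivity

lemma StrictMonoOn.lt_of_tendsto_atTop {f : ℝ → ℝ} {x₀ l : ℝ} (hf : StrictMonoOn f (Ioi x₀))
    (hl : Tendsto f atTop (𝓝 l)) {y : ℝ} (hy : x₀ < y) : f y < l := by
  have hmono : ∀ z ≥ y + 1, f (y + 1) ≤ f z := fun z hz ↦
    hf.monotoneOn (mem_Ioi.2 (by linarith)) (mem_Ioi.2 (by linarith)) hz
  calc f y < f (y + 1) := hf hy (mem_Ioi.2 (by linarith)) (by linarith)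
    _ ≤ l := ge_of_tendsto hl (eventually_ge_atTop (y + 1) |>.mono hmono)

lemma lt_mul_of_strictMonoOn_sub {I : ℝ → ℝ} {a b c z : ℝ} (ha : 0 < a) (hc : 0 < c)
    (hI : Tendsto I atTop (𝓝 0))
    (hΦ : StrictMonoOn (fun y ↦ I (a * c * y) - b * I (c * y)) (Ioi 0)) (hz : 0 < z) :
    I (c * (a * z)) < b * I (c * z) := by
  have hlim : Tendsto (fun y ↦ I (a * c * y) - b * I (c * y)) atTop (𝓝 0) := by
    simpa using (hI.comp (tendsto_id.const_mul_atTop (mul_pos ha hc))).sub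
      ((hI.comp (tendsto_id.const_mul_atTop hc)).const_mul b)
  have hΦz := hΦ.lt_of_tendsto_atTop hlim hz
  rw [← mul_assoc, mul_comm c a]
  linarith

lemma eq_of_functional_eq {a b : ℝ} {g F G : ℝ → ℝ} (ha : 0 < a) (hb : 0 < b)
    (hF : ∀ y > 0, 0 < F y) (hG : ∀ y > 0, 0 < G y)
    (hFeq : ∀ y > 0, F (a * y) + b * F y = g y) (hGeq : ∀ y > 0, G (a * y) + b * G y = g y)
    {y : ℝ} (hy : 0 < y) (hdecay : Tendsto (fun m : ℕ ↦ b⁻¹ ^ m * g (a ^ m * y)) atTop (𝓝 0)) :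
    F y = G y := by
  have hbound : ∀ z > 0, |F z - G z| ≤ b⁻¹ * g z := by
    intro z hz
    have hFz : F z ≤ b⁻¹ * g z := by
      rw [le_inv_mul_iff₀ hb]; linarith [hFeq z hz, hF (a * z) (by positivity)]
    have hGz : G z ≤ b⁻¹ * g z := by
      rw [le_inv_mul_iff₀ hb]; linarith [hGeq z hz, hG (a * z) (by positivity)]
    exact abs_sub_le_iff.2 ⟨by linarith [hG z hz], by linarith [hF z hz]⟩
  have hiter : ∀ m : ℕ, |F y - G y| = b⁻¹ ^ m * |F (a ^ m * y) - G (a ^ m * y)| := by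
    intro m
    induction m with
    | zero => simp
    | succ m ih =>
      have hm : 0 < a ^ m * y := by positivity
      have hstep : F (a ^ (m + 1) * y) - G (a ^ (m + 1) * y)
          = -b * (F (a ^ m * y) - G (a ^ m * y)) := by
        rw [pow_succ', mul_assoc]; linarith [hFeq _ hm, hGeq _ hm]
      rw [ih, hstep, abs_mul, abs_neg, abs_of_pos hb, pow_succ]
      field_simp
  have hle : ∀ m : ℕ, |F y - G y| ≤ b⁻¹ * (b⁻¹ ^ m * g (a ^ m * y)) := by
    intro m
    rw [hiter m, mul_left_comm]
    exact mul_le_mul_of_nonneg_left (hbound _ (by positivity)) (by positivity)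
  have h0 : |F y - G y| ≤ 0 := by
    simpa using ge_of_tendsto' (hdecay.const_mul b⁻¹) hle
  exact sub_eq_zero.1 (abs_nonpos_iff.1 h0)

lemma tendsto_inv_rpow_pow_mul {a L y : ℝ} {h : ℝ → ℝ} (ha : 0 < a) (hy : 0 < y)
    (hΨ : (1 < a ∧ Tendsto (fun z ↦ z ^ (-L) * h z) atTop (𝓝 0)) ∨
      (a < 1 ∧ Tendsto (fun z ↦ z ^ (-L) * h z) (𝓝[>] 0) (𝓝 0))) :
    Tendsto (fun m : ℕ ↦ (a ^ L)⁻¹ ^ m * h (a ^ m * y)) atTop (𝓝 0) := by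
  have horbit : Tendsto (fun m : ℕ ↦ (a ^ m * y) ^ (-L) * h (a ^ m * y)) atTop (𝓝 0) := by
    rcases hΨ with ⟨ha1, hΨ⟩ | ⟨ha1, hΨ⟩
    · exact hΨ.comp ((tendsto_pow_atTop_atTop_of_one_lt ha1).atTop_mul_const hy)
    · refine hΨ.comp (tendsto_nhdsWithin_iff.2 ⟨?_, Eventually.of_forall fun m ↦ ?_⟩)
      · simpa using (tendsto_pow_atTop_nhds_zero_of_lt_one ha.le ha1).mul_const y
      · exact mul_pos (pow_pos ha m) hy
  have heq : ∀ m : ℕ, (a ^ L)⁻¹ ^ m * h (a ^ m * y)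
      = y ^ L * ((a ^ m * y) ^ (-L) * h (a ^ m * y)) := by
    intro m
    have hyL : y ^ L ≠ 0 := (Real.rpow_pos_of_pos hy L).ne'
    rw [Real.mul_rpow (by positivity) hy.le, Real.rpow_neg (by positivity), Real.rpow_neg hy.le,
      ← Real.rpow_pow_comm ha.le, inv_pow]
    field_simp
  simpa only [heq, mul_zero] using horbit.const_mul (y ^ L)

lemma riskNeutralProb_mem_Ioo {u d : ℝ} (hu : 1 < u) (hd1 : d < 1) :
    (1 - d) / (u - d) ∈ Ioo (0 : ℝ) 1 :=
  ⟨div_pos (by linarith) (by linarith), (div_lt_one (by linarith)).2 (by linarith)⟩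

theorem stmt15_general
    (u d p q a b c L : ℝ)
    (hu : 1 < u) (hd1 : d < 1) (hp0 : 0 < p) (hp1 : p < 1)
    (hq : q = (1 - d) / (u - d)) (ha : a = ((1 - p) * q) / (p * (1 - q)))
    (hb : b = (1 - q) / q) (hc : c = (1 - p) / (1 - q))
    (ha1 : a ≠ 1)
    (hL : L = Real.log b / Real.log a)
    (I₀ : ℝ → ℝ) (hI₀ : IsInvMarginal I₀)
    (hΦ : StrictMonoOn (fun y => I₀ (a * c * y) - b * I₀ (c * y)) (Set.Ioi 0))
    (hΨ : (1 < a ∧ Tendsto (fun y => y ^ (-L) * I₀ (c * y)) atTop (nhds 0)) ∨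
          (a < 1 ∧ Tendsto (fun y => y ^ (-L) * I₀ (c * y)) (nhdsWithin 0 (Set.Ioi 0)) (nhds 0)))
    (I₁ : ℝ → ℝ)
    (hI₁def : ∀ y > 0, Tendsto
      (fun N => ∑ m ∈ Finset.range N,
        ((1 + b) / b) * ((-1 : ℝ) ^ m * b ^ (-(m : ℤ)) * I₀ (a ^ m * c * y)))
      atTop (nhds (I₁ y))) :
    (∀ y > 0, I₁ (a * y) + b * I₁ y = (1 + b) * I₀ (c * y)) ∧
    (∀ y > 0, 0 < I₁ y) ∧
    (∀ Itil : ℝ → ℝ, (∀ y > 0, 0 < Itil y) →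
      (∀ y > 0, Itil (a * y) + b * Itil y = (1 + b) * I₀ (c * y)) →
      ∀ y > 0, Itil y = I₁ y) ∧
    (∀ Itil : ℝ → ℝ, IsInvMarginal Itil →
      (∀ y > 0, Itil (a * y) + b * Itil y = (1 + b) * I₀ (c * y)) →
      ∀ y > 0, Itil y = I₁ y) := by
  obtain ⟨hq0, hq1⟩ : 0 < q ∧ q < 1 := hq ▸ riskNeutralProb_mem_Ioo hu hd1
  have ha0 : 0 < a := ha ▸ div_pos (mul_pos (sub_pos.2 hp1) hq0) (mul_pos hp0 (sub_pos.2 hq1))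
  have hb0 : 0 < b := hb ▸ div_pos (sub_pos.2 hq1) hq0
  have hc0 : 0 < c := hc ▸ div_pos (sub_pos.2 hp1) (sub_pos.2 hq1)
  have hab : a ^ L = b := hL ▸ Real.rpow_logb ha0 ha1 hb0
  set g : ℝ → ℝ := fun z ↦ (1 + b) * I₀ (c * z)
  have hI₁ : ∀ y > 0, Tendsto (neumannSum a b g y) atTop (𝓝 (I₁ y)) := by
    refine fun y hy ↦ (hI₁def y hy).congr fun N ↦ sum_congr rfl fun m _ ↦ ?_
    have harg : a ^ m * c * y = c * (a ^ m * y) := by ring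
    simp only [g, harg, zpow_neg, zpow_natCast, inv_neg, neg_pow b⁻¹, inv_pow]
    field_simp
  have hFE : ∀ y > 0, I₁ (a * y) + b * I₁ y = g y := fun y hy ↦
    neumannSum_functional_eq hb0.ne' (hI₁ y hy) (hI₁ _ (mul_pos ha0 hy))
  have hΦneg : ∀ z > 0, g (a * z) < b * g z := fun z hz ↦ by
    simpa only [g, mul_left_comm b] using mul_lt_mul_of_pos_left
      (lt_mul_of_strictMonoOn_sub ha0 hc0 hI₀.2.2.2.1 hΦ hz) (by linarith : (0 : ℝ) < 1 + b)
  have hdecay : ∀ y > 0, Tendsto (fun m : ℕ ↦ b⁻¹ ^ m * g (a ^ m * y)) atTop (𝓝 0) := by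
    intro y hy
    simpa only [g, hab, mul_left_comm _ (1 + b), mul_zero] using
      (tendsto_inv_rpow_pow_mul (h := fun z ↦ I₀ (c * z)) ha0 hy hΨ).const_mul (1 + b)
  have hI₁pos : ∀ y > 0, 0 < I₁ y := fun y hy ↦ neumannSum_limit_pos ha0 hb0 hy (hI₁ y hy) hΦneg
  have huniq : ∀ Itil : ℝ → ℝ, (∀ y > 0, 0 < Itil y) →
      (∀ y > 0, Itil (a * y) + b * Itil y = g y) → ∀ y > 0, Itil y = I₁ y :=
    fun Itil hpos hfe y hy ↦ eq_of_functional_eq ha0 hb0 hpos hI₁pos hfe hFE hy (hdecay y hy)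
  exact ⟨hFE, hI₁pos, huniq, fun Itil hItil ↦ huniq Itil hItil.1⟩

/-- Under the increasing-`Φ₀` conditions, the function `I₁` defined by the series
`((1+b)/b)·∑ (−1)^m b^{−m} I₀(a^m c y)` is the unique positive solution of the functional
equation; in particular, it is the only inverse marginal function solving it. -/
theorem stmt15
    (u d p q a b c L : ℝ)
    (hu : 1 < u) (hd0 : 0 < d) (hd1 : d < 1) (hp0 : 0 < p) (hp1 : p < 1)
    (hq : q = (1 - d) / (u - d)) (ha : a = ((1 - p) * q) / (p * (1 - q)))
    (hb : b = (1 - q) / q) (hc : c = (1 - p) / (1 - q))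
    (ha1 : a ≠ 1)
    (hL : L = Real.log b / Real.log a)
    (I₀ : ℝ → ℝ) (hI₀ : IsInvMarginal I₀)
    (hΦ : StrictMonoOn (fun y => I₀ (a * c * y) - b * I₀ (c * y)) (Set.Ioi 0))
    (hΨ : (1 < a ∧ Tendsto (fun y => y ^ (-L) * I₀ (c * y)) atTop (nhds 0)) ∨
          (a < 1 ∧ Tendsto (fun y => y ^ (-L) * I₀ (c * y)) (nhdsWithin 0 (Set.Ioi 0)) (nhds 0)))
    (I₁ : ℝ → ℝ)
    (hI₁def : ∀ y > 0, Tendsto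
      (fun N => ∑ m ∈ Finset.range N,
        ((1 + b) / b) * ((-1 : ℝ) ^ m * b ^ (-(m : ℤ)) * I₀ (a ^ m * c * y)))
      atTop (nhds (I₁ y))) :
    (∀ y > 0, I₁ (a * y) + b * I₁ y = (1 + b) * I₀ (c * y)) ∧
    (∀ y > 0, 0 < I₁ y) ∧
    (∀ Itil : ℝ → ℝ, (∀ y > 0, 0 < Itil y) →
      (∀ y > 0, Itil (a * y) + b * Itil y = (1 + b) * I₀ (c * y)) →
      ∀ y > 0, Itil y = I₁ y) ∧
    (∀ Itil : ℝ → ℝ, IsInvMarginal Itil →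
      (∀ y > 0, Itil (a * y) + b * Itil y = (1 + b) * I₀ (c * y)) →
      ∀ y > 0, Itil y = I₁ y) :=
  stmt15_general u d p q a b c L hu hd1 hp0 hp1 hq ha hb hc ha1 hL I₀ hI₀ hΦ hΨ I₁ hI₁def
end
end
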